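/- arXiv:2110.02352 — 3 statements merged into one kernel-verified Lean document; each statement's English description precedes it below -/
import Mathlib

section
/- Suppose C ⊆ {0,1}^N is a set of Dyck strings that is also a binary B_h code (sums over ℤ of any at most h distinct codewords are pairwise distinct across distinct subsets). Then for any two distinct subsets S, T ⊆ C with |S|, |T| ≤ h, the multiset unions of prefix-and-suffix weight sequences of S and T differ; i.e., C is an h-MC code. -/
/-- Weight of the length-`i` prefix of `s`. -/
def pwt {n : ℕ} (s : Fin n → Bool) (i : ℕ) : ℕ :=
  (Finset.univ.filter (fun k : Fin n => (k : ℕ) < i ∧ s k = true)).card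

/-- Weight of the length-`i` suffix of `s`. -/
def swt {n : ℕ} (s : Fin n → Bool) (i : ℕ) : ℕ :=
  (Finset.univ.filter (fun k : Fin n => n - i ≤ (k : ℕ) ∧ s k = true)).card

/-- The prefix-suffix composition multiset of `s`: pairs `(length, weight)` of all
prefixes and suffixes of lengths `1, ..., N`. -/
def Mset {N : ℕ} (s : Fin N → Bool) : Multiset (ℕ × ℕ) :=
  (Multiset.range N).map (fun i => (i + 1, pwt s (i + 1))) +
  (Multiset.range N).map (fun i => (i + 1, swt s (i + 1)))

lemma pwt_zero {n : ℕ} (s : Fin n → Bool) : pwt s 0 = 0 := by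
  simp [pwt]

lemma pwt_succ {n : ℕ} (s : Fin n → Bool) (k : Fin n) :
    pwt s ((k : ℕ) + 1) = pwt s (k : ℕ) + (if s k then 1 else 0) := by
  unfold pwt
  rw [Finset.card_filter, Finset.card_filter]
  have h : (if s k then 1 else 0) = ∑ j : Fin n, if j = k ∧ s j = true then 1 else 0 := by
    rw [Finset.sum_eq_single_of_mem k (Finset.mem_univ k)]
    · by_cases hs : s k = true <;> simp [hs]
    · intro j _ hj; simp [hj]
  rw [h, ← Finset.sum_add_distrib]
  apply Finset.sum_congr rfl
  intro j _
  by_cases hs : s j = true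
  · by_cases hj : j = k
    · subst hj; simp [hs]
    · have hne : (j : ℕ) ≠ (k : ℕ) := fun hh => hj (Fin.ext hh)
      simp only [hs, and_true, hj, false_and, if_false]
      split_ifs <;> omega
  · simp [hs]

lemma pwt_add_swt {n : ℕ} (s : Fin n → Bool) (i : ℕ) :
    pwt s (n - i) + swt s i = pwt s n := by
  unfold pwt swt
  rw [Finset.card_filter, Finset.card_filter, Finset.card_filter, ← Finset.sum_add_distrib]
  apply Finset.sum_congr rfl
  intro k _
  have hk := k.isLt
  by_cases hs : s k = true
  · simp only [hs, and_true]
    split_ifs <;> omega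
  · simp [hs]

/-- additivity of mapped-sum over a Finset-sum of multisets -/
lemma map_sum_finset {α : Type*} (f : ℕ × ℕ → ℤ) (S : Finset α) (g : α → Multiset (ℕ × ℕ)) :
    ((∑ x ∈ S, g x).map f).sum = ∑ x ∈ S, ((g x).map f).sum := by
  induction S using Finset.cons_induction with
  | empty => simp
  | cons a s ha ih => simp [Finset.sum_cons, ih]

lemma card_sum_finset {α : Type*} (S : Finset α) (g : α → Multiset (ℕ × ℕ)) :
    Multiset.card (∑ x ∈ S, g x) = ∑ x ∈ S, Multiset.card (g x) := by
  induction S using Finset.cons_induction with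
  | empty => simp
  | cons a s ha ih => simp [Finset.sum_cons, ih]

lemma Mset_card {N : ℕ} (s : Fin N → Bool) : Multiset.card (Mset s) = 2 * N := by
  simp [Mset]; ring

lemma map_Mset_sum {N : ℕ} (s : Fin N → Bool) (f : ℕ × ℕ → ℤ) :
    ((Mset s).map f).sum =
      (∑ j ∈ Finset.range N, f (j + 1, pwt s (j + 1))) +
      (∑ j ∈ Finset.range N, f (j + 1, swt s (j + 1))) := by
  simp only [Mset, Multiset.map_add, Multiset.sum_add, Multiset.map_map, Function.comp]
  rw [Finset.sum, Finset.sum, Finset.range_val]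

lemma sum_range_pick (N i : ℕ) (h1 : 1 ≤ i) (h2 : i ≤ N) (c : ℕ → ℤ) :
    (∑ j ∈ Finset.range N, if j + 1 = i then c (j + 1) else 0) = c i := by
  rw [Finset.sum_eq_single_of_mem (i - 1) (Finset.mem_range.2 (by omega))]
  · rw [if_pos (by omega), show i - 1 + 1 = i from by omega]
  · intro j _ hj
    rw [if_neg (by omega)]

def fI (i : ℕ) (p : ℕ × ℕ) : ℤ := if p.1 = i then (p.2 : ℤ) else 0
def gI (i : ℕ) (p : ℕ × ℕ) : ℤ := if p.1 = i then ((max p.2 (p.1 - p.2) : ℕ) : ℤ) else 0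

lemma twice_pwt {N : ℕ} (hN : Even N) (s : Fin N → Bool)
    (htot : pwt s N = N / 2)
    (hdy : ∀ i : ℕ, 1 ≤ i → i ≤ N - 1 → (i + 1) / 2 ≤ pwt s i)
    (i : ℕ) (hi : i ≤ N) : i ≤ 2 * pwt s i := by
  obtain ⟨r, hr⟩ := hN
  rcases Nat.eq_zero_or_pos i with h0 | h1
  · omega
  rcases eq_or_lt_of_le hi with hIN | hIN
  · subst hIN; omega
  · have := hdy i (by omega) (by omega); omega

lemma twice_swt {N : ℕ} (hN : Even N) (s : Fin N → Bool)
    (htot : pwt s N = N / 2)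
    (hdy : ∀ i : ℕ, 1 ≤ i → i ≤ N - 1 → (i + 1) / 2 ≤ pwt s i)
    (i : ℕ) (hi : i ≤ N) : 2 * swt s i ≤ i := by
  obtain ⟨r, hr⟩ := hN
  have h1 := pwt_add_swt s i
  have h2 := twice_pwt ⟨r, hr⟩ s htot hdy (N - i) (by omega)
  omega

lemma FG_Mset {N : ℕ} (hN : Even N) (s : Fin N → Bool)
    (htot : pwt s N = N / 2)
    (hdy : ∀ i : ℕ, 1 ≤ i → i ≤ N - 1 → (i + 1) / 2 ≤ pwt s i)
    (i : ℕ) (h1 : 1 ≤ i) (h2 : i ≤ N) :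
    ((Mset s).map (fI i)).sum + ((Mset s).map (gI i)).sum
      = 2 * (pwt s i : ℤ) + (i : ℤ) := by
  have ha : i ≤ 2 * pwt s i := twice_pwt hN s htot hdy i h2
  have hb : 2 * swt s i ≤ i := twice_swt hN s htot hdy i h2
  rw [map_Mset_sum, map_Mset_sum]
  unfold fI gI
  rw [sum_range_pick N i h1 h2 (fun t => (pwt s t : ℤ)),
      sum_range_pick N i h1 h2 (fun t => (swt s t : ℤ)),
      sum_range_pick N i h1 h2 (fun t => ((max (pwt s t) (t - pwt s t) : ℕ) : ℤ)),
      sum_range_pick N i h1 h2 (fun t => ((max (swt s t) (t - swt s t) : ℕ) : ℤ))]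
  rw [Nat.max_eq_left (by omega : i - pwt s i ≤ pwt s i),
      Nat.max_eq_right (by omega : swt s i ≤ i - swt s i)]
  have hble : swt s i ≤ i := by omega
  push_cast [Nat.cast_sub hble]
  ring

/-- a binary `B_h` code consisting of Dyck strings is an `h`-MC code. -/
theorem stmt3 (N h : ℕ) (hN : Even N) (C : Set (Fin N → Bool))
    (hDyck : ∀ s ∈ C, pwt s N = N / 2 ∧
      ∀ i : ℕ, 1 ≤ i → i ≤ N - 1 → (i + 1) / 2 ≤ pwt s i)
    (hBh : ∀ S T : Finset (Fin N → Bool), ↑S ⊆ C → ↑T ⊆ C →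
      S.card ≤ h → T.card ≤ h →
      (∑ x ∈ S, (fun k => if x k then (1 : ℤ) else 0) : Fin N → ℤ) =
        (∑ x ∈ T, (fun k => if x k then (1 : ℤ) else 0) : Fin N → ℤ) → S = T) :
    ∀ S T : Finset (Fin N → Bool), ↑S ⊆ C → ↑T ⊆ C →
      S.card ≤ h → T.card ≤ h → S ≠ T →
      (∑ x ∈ S, Mset x) ≠ (∑ x ∈ T, Mset x) := by
  intro S T hS hT hSc hTc hne hMeq
  refine hne (hBh S T hS hT hSc hTc ?_)
  by_cases hN0 : N = 0
  · subst hN0; funext k; exact k.elim0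
  -- |S| = |T|
  have hm : S.card = T.card := by
    have hcard := congrArg Multiset.card hMeq
    rw [card_sum_finset, card_sum_finset] at hcard
    simp only [Mset_card, Finset.sum_const, smul_eq_mul] at hcard
    exact Nat.eq_of_mul_eq_mul_right (by omega) hcard
  -- key: prefix-weight sums agree at every length
  have key : ∀ i : ℕ, i ≤ N →
      (∑ x ∈ S, (pwt x i : ℤ)) = ∑ x ∈ T, (pwt x i : ℤ) := by
    intro i hi
    rcases Nat.eq_zero_or_pos i with h0 | h1
    · subst h0; simp [pwt_zero]
    have hFG := congrArg (fun M => ((M.map (fI i)).sum + (M.map (gI i)).sum)) hMeq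
    simp only [map_sum_finset] at hFG
    rw [← Finset.sum_add_distrib, ← Finset.sum_add_distrib] at hFG
    rw [Finset.sum_congr rfl (fun x hx =>
          FG_Mset hN x (hDyck x (hS hx)).1 (hDyck x (hS hx)).2 i h1 hi),
        Finset.sum_congr rfl (fun x hx =>
          FG_Mset hN x (hDyck x (hT hx)).1 (hDyck x (hT hx)).2 i h1 hi)] at hFG
    rw [Finset.sum_add_distrib, Finset.sum_add_distrib, ← Finset.mul_sum, ← Finset.mul_sum,
        Finset.sum_const, Finset.sum_const, hm] at hFG
    have : (T.card : ℤ) • (i : ℤ) = T.card * i := smul_eq_mul ..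
    linarith [hFG]
  -- coordinate sums agree
  funext k
  rw [Finset.sum_apply, Finset.sum_apply]
  have hx : ∀ x : Fin N → Bool,
      (if x k then (1 : ℤ) else 0) = (pwt x ((k : ℕ) + 1) : ℤ) - (pwt x (k : ℕ) : ℤ) := by
    intro x
    have hps := pwt_succ x k
    by_cases hxk : x k = true <;> simp [hxk] at hps ⊢ <;> omega
  simp only [hx]
  rw [Finset.sum_sub_distrib, Finset.sum_sub_distrib,
      key ((k : ℕ) + 1) k.isLt, key (k : ℕ) (le_of_lt k.isLt)]
end

section
/- Let s ∈ {0,1}^n with n a perfect square and √n even, parsed into √n blocks of length √n. Define u = u_1...u_{√n} by u_1 = s_1 and for j ≥ 2, u_j = s_j if the signs of R(u_1...u_{j−1}) and R(s_j) differ (treating R ≥ 0 as nonnegative sign), and u_j = complement of s_j otherwise, where R(x) = 2·wt(x) − |x| is the running digital sum. Then for every j ∈ [√n], |R(u_1...u_j)| ≤ √n. -/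
/-- Running digital sum of a block `x` of length `m`: `2·wt(x) − m`. -/
def Rb {m : ℕ} (x : Fin m → Bool) : ℤ :=
  2 * ((Finset.univ.filter (fun k : Fin m => x k = true)).card : ℤ) - m

/-- RDS of the concatenation of the first `j` blocks of `u`. -/
def Rpre {m : ℕ} (u : Fin m → Fin m → Bool) (j : ℕ) : ℤ :=
  ∑ k ∈ Finset.univ.filter (fun k : Fin m => (k : ℕ) < j), Rb (u k)

lemma Rb_bound {m : ℕ} (x : Fin m → Bool) : |Rb x| ≤ (m : ℤ) := by
  unfold Rb
  have h := Finset.card_filter_le Finset.univ (fun k : Fin m => x k = true)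
  rw [Finset.card_univ, Fintype.card_fin] at h
  have h' : ((Finset.univ.filter (fun k : Fin m => x k = true)).card : ℤ) ≤ m := by
    exact_mod_cast h
  have h0 : (0:ℤ) ≤ ((Finset.univ.filter (fun k : Fin m => x k = true)).card : ℤ) := by
    positivity
  rw [abs_le]; omega

lemma Rb_neg {m : ℕ} (x : Fin m → Bool) : Rb (fun k => ! x k) = - Rb x := by
  unfold Rb
  have he : (Finset.univ.filter (fun k : Fin m => (! x k) = true)) =
      (Finset.univ.filter (fun k : Fin m => x k = true))ᶜ := by
    ext k; simp
  rw [he, Finset.card_compl]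
  have h := Finset.card_filter_le Finset.univ (fun k : Fin m => x k = true)
  rw [Finset.card_univ, Fintype.card_fin] at h
  rw [Fintype.card_fin, Nat.cast_sub h]
  ring

lemma Rpre_succ {m : ℕ} (u : Fin m → Fin m → Bool) (j : ℕ) (hj : j < m) :
    Rpre u (j + 1) = Rpre u j + Rb (u ⟨j, hj⟩) := by
  unfold Rpre
  have he : (Finset.univ.filter (fun k : Fin m => (k : ℕ) < j + 1)) =
      insert ⟨j, hj⟩ (Finset.univ.filter (fun k : Fin m => (k : ℕ) < j)) := by
    ext k
    simp only [Finset.mem_insert, Finset.mem_filter, Finset.mem_univ, true_and,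
      Fin.ext_iff]
    omega
  rw [he, Finset.sum_insert (by simp)]
  ring

/-- under the block-balancing rule, the RDS of every full-block prefix of
`u` is bounded in absolute value by `m = √n`. -/
theorem stmt6 (m : ℕ) (hm : Even m) (hpos : 0 < m) (s u : Fin m → Fin m → Bool)
    (h0 : u ⟨0, hpos⟩ = s ⟨0, hpos⟩)
    (hrec : ∀ j : Fin m, 1 ≤ (j : ℕ) →
      u j = if (Rpre u (j : ℕ) < 0 ∧ 0 ≤ Rb (s j)) ∨ (0 ≤ Rpre u (j : ℕ) ∧ Rb (s j) < 0)
        then s j else (fun k => ! s j k)) :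
    ∀ j : ℕ, j ≤ m → |Rpre u j| ≤ (m : ℤ) := by
  intro j
  induction j with
  | zero =>
    intro _
    have : Rpre u 0 = 0 := by
      unfold Rpre
      rw [Finset.filter_false_of_mem (by intro k _; omega)]
      simp
    rw [this]; simp
  | succ j ih =>
    intro hj1
    have hj : j < m := by omega
    have ihj := ih (by omega)
    rw [Rpre_succ u j hj]
    rcases Nat.eq_zero_or_pos j with h | h
    · subst h
      have : Rpre u 0 = 0 := by
        unfold Rpre
        rw [Finset.filter_false_of_mem (by intro k _; omega)]
        simp
      rw [this, zero_add]
      exact Rb_bound _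
    · -- key sign property
      have hrecj := hrec ⟨j, hj⟩ h
      simp only [Fin.val_mk] at hrecj
      have hb := Rb_bound (u ⟨j, hj⟩)
      rw [abs_le] at hb ihj ⊢
      have hsign : (Rpre u j < 0 → 0 ≤ Rb (u ⟨j, hj⟩)) ∧
          (0 ≤ Rpre u j → Rb (u ⟨j, hj⟩) ≤ 0) := by
        rw [hrecj]
        split_ifs with hc
        · constructor
          · intro hneg
            rcases hc with ⟨_, h2⟩ | ⟨h1, _⟩
            · exact h2
            · omega
          · intro hpos'
            rcases hc with ⟨h1, _⟩ | ⟨_, h2⟩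
            · omega
            · exact le_of_lt h2
        · push_neg at hc
          rw [Rb_neg]
          constructor
          · intro hneg
            have := (hc.1 hneg)
            omega
          · intro hpos'
            have := hc.2 hpos'
            omega
      rcases lt_or_ge (Rpre u j) 0 with hlt | hge
      · have := hsign.1 hlt; omega
      · have := hsign.2 hge; omega
end

section
/- Let C ⊆ {0,1}^n be a 2-prefix code (distinct subsets of size at most 2 have distinct multiset unions of prefix-weight sequences). Fix a split n = a + b, and let G^(w) be the bipartite graph whose left vertices are length-a prefixes of weight w occurring in C, right vertices are length-b suffixes occurring with such prefixes, and edges are codewords. Then G^(w) contains no cycle of length 4: there are no distinct prefixes a_1, a_2 of equal weight w and distinct suffixes b_1, b_2 with all four concatenations a_1b_1, a_1b_2, a_2b_1, a_2b_2 in C. -/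
/-- The prefix composition multiset of `s`: pairs `(i, wt(s₁...s_i))` for `i ∈ [n]`. -/
def Mp {n : ℕ} (s : Fin n → Bool) : Multiset (ℕ × ℕ) :=
  (Multiset.range n).map (fun i => (i + 1, pwt s (i + 1)))

lemma pwt_eq_sum {n : ℕ} (s : Fin n → Bool) (i : ℕ) :
    pwt s i = ∑ k : Fin n, if (k : ℕ) < i ∧ s k = true then 1 else 0 := by
  rw [pwt, Finset.card_filter]

lemma pwt_append (a b : ℕ) (x : Fin a → Bool) (y : Fin b → Bool) (i : ℕ) :
    pwt (Fin.append x y) i =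
      pwt x i + ∑ j : Fin b, if a + (j : ℕ) < i ∧ y j = true then 1 else 0 := by
  rw [pwt_eq_sum, pwt_eq_sum, Fin.sum_univ_add]
  congr 1
  · exact Finset.sum_congr rfl fun k _ => by simp [Fin.append_left]
  · exact Finset.sum_congr rfl fun j _ => by simp [Fin.append_right]

lemma pwt_full {a : ℕ} (x : Fin a → Bool) {i : ℕ} (h : a ≤ i) :
    pwt x i = (Finset.univ.filter (fun k => x k = true)).card := by
  unfold pwt
  congr 1
  ext k
  simp only [Finset.mem_filter, and_congr_right_iff]
  intro _
  constructor
  · tauto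
  · intro hk; exact ⟨lt_of_lt_of_le k.isLt h, hk⟩

lemma pair_swap {a b : ℕ} {w : ℕ} (a1 a2 : Fin a → Bool) (b1 b2 : Fin b → Bool)
    (hw1 : (Finset.univ.filter (fun k => a1 k = true)).card = w)
    (hw2 : (Finset.univ.filter (fun k => a2 k = true)).card = w) (i : ℕ) :
    ({(i + 1, pwt (Fin.append a1 b1) (i + 1)), (i + 1, pwt (Fin.append a2 b2) (i + 1))} :
        Multiset (ℕ × ℕ)) =
      {(i + 1, pwt (Fin.append a1 b2) (i + 1)), (i + 1, pwt (Fin.append a2 b1) (i + 1))} := by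
  rw [pwt_append, pwt_append, pwt_append, pwt_append]
  by_cases h : i + 1 ≤ a
  · have hz : ∀ (y : Fin b → Bool),
        (∑ j : Fin b, if a + (j : ℕ) < i + 1 ∧ y j = true then 1 else 0) = 0 := by
      intro y
      apply Finset.sum_eq_zero
      intro j _
      have : ¬ (a + (j : ℕ) < i + 1) := by omega
      simp [this]
    simp only [hz]
  · have h' : a ≤ i + 1 := by omega
    rw [pwt_full a1 h', pwt_full a2 h', hw1, hw2]
    exact Multiset.pair_comm _ _

lemma map_add_swap {α β : Type*} (f11 f22 f12 f21 : α → β) (m : Multiset α)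
    (h : ∀ i ∈ m, ({f11 i, f22 i} : Multiset β) = {f12 i, f21 i}) :
    m.map f11 + m.map f22 = m.map f12 + m.map f21 := by
  induction m using Multiset.induction with
  | empty => simp
  | cons x s ih =>
    have hx := h x (Multiset.mem_cons_self x s)
    have hs := ih fun i hi => h i (Multiset.mem_cons_of_mem hi)
    simp only [Multiset.map_cons]
    have e : ∀ (c : β) (m' : Multiset β), c ::ₘ m' = {c} + m' :=
      fun c m' => (Multiset.singleton_add c m').symm
    rw [e, e, e, e]
    have hx' : ({f11 x} + {f22 x} : Multiset β) = {f12 x} + {f21 x} := by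
      simpa [Multiset.insert_eq_cons, ← Multiset.singleton_add, add_assoc] using hx
    calc {f11 x} + s.map f11 + ({f22 x} + s.map f22)
        = ({f11 x} + {f22 x}) + (s.map f11 + s.map f22) := by abel
      _ = ({f12 x} + {f21 x}) + (s.map f12 + s.map f21) := by rw [hx', hs]
      _ = {f12 x} + s.map f12 + ({f21 x} + s.map f21) := by abel

lemma append_left_eq {a b : ℕ} {x x' : Fin a → Bool} {y y' : Fin b → Bool}
    (h : Fin.append x y = Fin.append x' y') : x = x' := by
  funext k
  have := congrFun h (Fin.castAdd b k)
  simpa [Fin.append_left] using this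

lemma append_right_eq {a b : ℕ} {x x' : Fin a → Bool} {y y' : Fin b → Bool}
    (h : Fin.append x y = Fin.append x' y') : y = y' := by
  funext j
  have := congrFun h (Fin.natAdd a j)
  simpa [Fin.append_right] using this

/-- the graph `G^(w)` of a 2-prefix code contains no 4-cycle: there are no
distinct prefixes of equal weight `w` and distinct suffixes with all four concatenations
in the code. -/
theorem stmt14 (a b : ℕ) (C : Set (Fin (a + b) → Bool))
    (hpc : ∀ S T : Finset (Fin (a + b) → Bool), ↑S ⊆ C → ↑T ⊆ C →
      S.card ≤ 2 → T.card ≤ 2 →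
      (∑ x ∈ S, Mp x) = (∑ x ∈ T, Mp x) → S = T)
    (w : ℕ) :
    ¬ ∃ (a1 a2 : Fin a → Bool) (b1 b2 : Fin b → Bool),
      a1 ≠ a2 ∧ b1 ≠ b2 ∧
      (Finset.univ.filter (fun k => a1 k = true)).card = w ∧
      (Finset.univ.filter (fun k => a2 k = true)).card = w ∧
      Fin.append a1 b1 ∈ C ∧ Fin.append a1 b2 ∈ C ∧
      Fin.append a2 b1 ∈ C ∧ Fin.append a2 b2 ∈ C := by
  rintro ⟨a1, a2, b1, b2, ha, hb, hw1, hw2, h11, h12, h21, h22⟩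
  set s11 := Fin.append a1 b1 with hs11
  set s12 := Fin.append a1 b2 with hs12
  set s21 := Fin.append a2 b1 with hs21
  set s22 := Fin.append a2 b2 with hs22
  have hne1 : s11 ≠ s22 := fun h => ha (append_left_eq h)
  have hne2 : s12 ≠ s21 := fun h => ha (append_left_eq h)
  have hne3 : s11 ≠ s12 := fun h => hb (append_right_eq h)
  have hne4 : s11 ≠ s21 := fun h => ha (append_left_eq h)
  set S : Finset (Fin (a + b) → Bool) := {s11, s22} with hS
  set T : Finset (Fin (a + b) → Bool) := {s12, s21} with hT
  have hsum : (∑ x ∈ S, Mp x) = ∑ x ∈ T, Mp x := by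
    rw [hS, hT, Finset.sum_pair hne1, Finset.sum_pair hne2]
    unfold Mp
    exact map_add_swap _ _ _ _ _ (fun i _ => pair_swap a1 a2 b1 b2 hw1 hw2 i)
  have hST : S = T := by
    apply hpc
    · intro x hx
      simp only [hS, Finset.coe_insert, Finset.coe_singleton, Set.mem_insert_iff,
        Set.mem_singleton_iff] at hx
      rcases hx with rfl | rfl <;> assumption
    · intro x hx
      simp only [hT, Finset.coe_insert, Finset.coe_singleton, Set.mem_insert_iff,
        Set.mem_singleton_iff] at hx
      rcases hx with rfl | rfl <;> assumption
    · exact (Finset.card_insert_le _ _).trans (by simp)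
    · exact (Finset.card_insert_le _ _).trans (by simp)
    · exact hsum
  have : s11 ∈ T := by rw [← hST]; simp [hS]
  simp only [hT, Finset.mem_insert, Finset.mem_singleton] at this
  rcases this with h | h
  · exact hne3 h
  · exact hne4 h
end
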